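/- The character of W(Λ_r) at weight α = n_1γ_1 + ... + n_ℓγ_ℓ, defined as χ^α(q) = Σ_i q^i · #{configurations of weight α and degree i satisfying difference and initial conditions}, satisfies the q-series identity χ^α(q) = q^{N(α,r)}/((q)_{n_1}···(q)_{n_ℓ}) where N(α,r) = Σ n_i² + Σ_{i<j} n_i n_j + Σ_{i=1}^r n_i, and in particular χ^α(q) · ∏_{j=1}^ℓ (q)_{n_j} = q^{N(α,r)}. -/

import Mathlib

/-!
Write the parts of colour `j` as `m_{j,k} = A_j + 2k + c_{j,0} + ⋯ + c_{j,k}`, where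
`A_j = 1 + Σ_{i<j} n_i + δ_{j≤r}` is the smallest allowed first part. This is a bijection between
configurations and families of free excesses `c_{j,k} ≥ 0`, under which the degree becomes
`N(α,r) + Σ_{j,k} (n_j - k) c_{j,k}`: the excess `c_{j,k}` raises the `n_j - k` parts from the
`k`-th on. As `k` runs over `0, …, n_j - 1` the weight `n_j - k` runs over `1, …, n_j`, so the
character is `q^{N(α,r)}` times `∏_j ∏_{i=1}^{n_j} 1 / (1 - q^i)`.
-/

open Finset PowerSeries

/-- The number of configurations of weight `(n_1, …, n_ℓ)` and degree `d`:
for each color `j` a strictly increasing sequence `m_{j,1} < ⋯ < m_{j,n_j}` of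
positive integers with `m_{j,1} ≥ 1 + Σ_{i<j} n_i + δ_{j≤r}` and gaps
`m_{j,k+1} - m_{j,k} ≥ 2`, of total sum `d`. -/
noncomputable def configCount (ℓ r : ℕ) (n : Fin ℓ → ℕ) (d : ℕ) : ℕ :=
  Nat.card {m : (j : Fin ℓ) → Fin (n j) → ℕ //
    (∀ j k, 1 ≤ m j k) ∧
    (∀ (j : Fin ℓ) (k : Fin (n j)), (k : ℕ) = 0 →
      1 + (∑ i ∈ Finset.univ.filter (· < j), n i) +
        (if (j : ℕ) + 1 ≤ r then 1 else 0) ≤ m j k) ∧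
    (∀ (j : Fin ℓ) (k l : Fin (n j)), (k : ℕ) + 1 = (l : ℕ) → m j k + 2 ≤ m j l) ∧
    ∑ j, ∑ k, m j k = d}

/-- The character of `W(Λ_r)` at weight `α = n_1γ_1 + ⋯ + n_ℓγ_ℓ`:
`χ^α(q) = Σ_d (#configurations of weight α and degree d) q^d`. -/
noncomputable def chiW (ℓ r : ℕ) (n : Fin ℓ → ℕ) : PowerSeries ℚ :=
  PowerSeries.mk fun d => (configCount ℓ r n d : ℚ)

namespace PowerSeries

variable {R : Type*} [CommRing R]

theorem expand_mk_one_mul_one_sub_X_pow {w : ℕ} (hw : w ≠ 0) :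
    expand w hw (mk 1 : R⟦X⟧) * (1 - X ^ w) = 1 := by
  simpa [expand_X] using congrArg (expand w hw) (mk_one_mul_one_sub_eq_one R)

theorem coeff_expand_mk_one {w : ℕ} (hw : w ≠ 0) (d : ℕ) :
    coeff d (expand w hw (mk 1 : R⟦X⟧)) = if w ∣ d then 1 else 0 := by
  simp [coeff_expand]

theorem mk_natCard_add_eq_X_pow_mul {α : Type*} (N : ℕ) (f : α → ℕ) :
    (mk fun d => (Nat.card {a // N + f a = d} : R)) =
      X ^ N * mk fun d => (Nat.card {a // f a = d} : R) := by
  ext d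
  rw [coeff_X_pow_mul', coeff_mk]
  split_ifs with hNd
  · rw [coeff_mk,
      Nat.card_congr (Equiv.subtypeEquivRight (q := fun a => f a = d - N) fun a => by omega)]
  · have : IsEmpty {a // N + f a = d} := ⟨fun a => hNd (by omega)⟩
    rw [Nat.card_of_isEmpty, Nat.cast_zero]

end PowerSeries

section WeightedTuples

variable {ι : Type*} [Fintype ι] {w : ι → ℕ}

theorem card_filter_dvd_finsuppAntidiag [DecidableEq ι] (hw : ∀ i, w i ≠ 0) (d : ℕ) :
    #{l ∈ univ.finsuppAntidiag d | ∀ i, w i ∣ l i} =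
      Nat.card {b : ι → ℕ // ∑ i, w i * b i = d} := by
  rw [← Nat.card_eq_finsetCard]
  refine Nat.card_congr
    { toFun := fun l => ⟨fun i => l.1 i / w i, ?_⟩
      invFun := fun b => ⟨Finsupp.equivFunOnFinite.symm fun i => w i * b.1 i, ?_⟩
      left_inv := fun l => ?_
      right_inv := fun b => ?_ }
  · have hl : ∑ i, l.1 i = d ∧ ∀ i, w i ∣ l.1 i := by
      simpa [mem_finsuppAntidiag] using mem_filter.1 l.2
    calc ∑ i, w i * (l.1 i / w i) = ∑ i, l.1 i :=
          sum_congr rfl fun i _ => Nat.mul_div_cancel' (hl.2 i)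
      _ = d := hl.1
  · simpa [mem_finsuppAntidiag] using b.2
  · obtain ⟨l, hl⟩ := l
    simp only [mem_filter] at hl
    ext i
    simp [Nat.mul_div_cancel' (hl.2 i)]
  · ext i
    simp [Nat.mul_div_cancel_left _ (Nat.pos_of_ne_zero (hw i))]

theorem mk_natCard_mul_prod_one_sub_X_pow (R : Type*) [CommRing R] (hw : ∀ i, w i ≠ 0) :
    (mk fun d => (Nat.card {b : ι → ℕ // ∑ i, w i * b i = d} : R)) * ∏ i, (1 - X ^ w i) = 1 := by
  classical
  have hgen : (mk fun d => (Nat.card {b : ι → ℕ // ∑ i, w i * b i = d} : R)) =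
      ∏ i, expand (w i) (hw i) (mk 1) := by
    ext d
    simp only [coeff_mk, coeff_prod, coeff_expand_mk_one, prod_boole, sum_boole, mem_univ,
      true_implies, ← card_filter_dvd_finsuppAntidiag hw]
  rw [hgen, ← prod_mul_distrib]
  exact prod_eq_one fun i _ => expand_mk_one_mul_one_sub_X_pow (hw i)

end WeightedTuples

section GapSequence

variable {N : ℕ}

def partialSum (c : Fin N → ℕ) (v : ℕ) : ℕ := ∑ l : Fin N with l.val ≤ v, c l

lemma partialSum_zero (c : Fin N → ℕ) (h : 0 < N) : partialSum c 0 = c ⟨0, h⟩ := by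
  rw [partialSum, show univ.filter (fun l : Fin N => l.val ≤ 0) = {⟨0, h⟩} by
    ext l; simp [Fin.ext_iff], sum_singleton]

lemma partialSum_succ (c : Fin N → ℕ) (v : ℕ) (h : v + 1 < N) :
    partialSum c (v + 1) = partialSum c v + c ⟨v + 1, h⟩ := by
  rw [partialSum, partialSum, show univ.filter (fun l : Fin N => l.val ≤ v + 1)
      = insert ⟨v + 1, h⟩ (univ.filter fun l : Fin N => l.val ≤ v) by
        ext l; simp [Fin.ext_iff]; omega,
    sum_insert (by simp), add_comm]

lemma partialSum_mono (c : Fin N → ℕ) : Monotone (partialSum c) :=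
  fun _ _ huv => sum_le_sum_of_subset fun l => by simp only [mem_filter_univ]; omega

lemma sum_partialSum (c : Fin N → ℕ) :
    ∑ k : Fin N, partialSum c k = ∑ l : Fin N, (N - l) * c l := by
  simp only [partialSum, sum_filter]
  rw [sum_comm]
  refine sum_congr rfl fun l _ => ?_
  rw [← sum_filter, sum_const, smul_eq_mul]
  simp only [Fin.val_fin_le, filter_le_eq_Ici, Fin.card_Ici]

def gapSeq (a : ℕ) (c : Fin N → ℕ) (k : Fin N) : ℕ := a + 2 * k + partialSum c k

def gapDiff (a : ℕ) (m : Fin N → ℕ) (k : Fin N) : ℕ :=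
  if h : (k : ℕ) = 0 then m k - a else m k - m ⟨k - 1, by omega⟩ - 2

def IsGapSeq (a : ℕ) (m : Fin N → ℕ) : Prop :=
  (∀ k : Fin N, (k : ℕ) = 0 → a ≤ m k) ∧ ∀ k l : Fin N, (k : ℕ) + 1 = l → m k + 2 ≤ m l

lemma gapSeq_gapDiff {a : ℕ} {m : Fin N → ℕ} (hm : IsGapSeq a m) :
    gapSeq a (gapDiff a m) = m := by
  funext ⟨v, hv⟩
  induction v with
  | zero =>
    have := hm.1 ⟨0, hv⟩ rfl
    simp only [gapSeq, partialSum_zero _ hv, gapDiff, dif_pos]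
    omega
  | succ v ih =>
    have hgap := hm.2 ⟨v, by omega⟩ ⟨v + 1, hv⟩ rfl
    have := ih (by omega)
    simp only [gapSeq, partialSum_succ _ v hv, gapDiff, Nat.add_one_ne_zero, ↓reduceDIte,
      Nat.add_sub_cancel] at this ⊢
    omega

lemma gapDiff_gapSeq (a : ℕ) (c : Fin N → ℕ) : gapDiff a (gapSeq a c) = c := by
  funext ⟨v, hv⟩
  cases v with
  | zero => simp [gapDiff, gapSeq, partialSum_zero _ hv]
  | succ v =>
    simp only [gapDiff, gapSeq, Nat.add_one_ne_zero, ↓reduceDIte, Nat.add_sub_cancel,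
      partialSum_succ _ v hv]
    have := partialSum_mono c (Nat.le_succ v)
    omega

lemma isGapSeq_gapSeq (a : ℕ) (c : Fin N → ℕ) : IsGapSeq a (gapSeq a c) := by
  refine ⟨fun k _ => by simp only [gapSeq]; omega, fun k l hkl => ?_⟩
  have := partialSum_mono c (show (k : ℕ) ≤ l by omega)
  simp only [gapSeq]
  omega

lemma sum_gapSeq (a : ℕ) (c : Fin N → ℕ) :
    ∑ k, gapSeq a c k = N * a + N * (N - 1) + ∑ k : Fin N, (N - k) * c k := by
  simp only [gapSeq, sum_add_distrib, sum_partialSum, ← mul_sum, sum_const, card_univ,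
    Fintype.card_fin, smul_eq_mul, Fin.sum_univ_eq_sum_range (fun k => k)]
  rw [mul_comm 2, sum_range_id_mul_two]

end GapSequence

def gapWeight {ℓ : ℕ} (n : Fin ℓ → ℕ) (i : Σ j, Fin (n j)) : ℕ := n i.1 - i.2

lemma gapWeight_ne_zero {ℓ : ℕ} {n : Fin ℓ → ℕ} (i : Σ j, Fin (n j)) : gapWeight n i ≠ 0 :=
  Nat.sub_ne_zero_of_lt i.2.isLt

section Configurations

variable (ℓ r : ℕ) (n : Fin ℓ → ℕ)

def minStart (j : Fin ℓ) : ℕ :=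
  1 + (∑ i ∈ univ.filter (· < j), n i) + (if (j : ℕ) + 1 ≤ r then 1 else 0)

def minDegree : ℕ :=
  (∑ i, n i ^ 2) + (∑ j, ∑ i ∈ univ.filter (· < j), n i * n j) +
    (∑ i ∈ univ.filter (fun i : Fin ℓ => (i : ℕ) + 1 ≤ r), n i)

lemma sum_minStart_eq_minDegree :
    ∑ j, (n j * minStart ℓ r n j + n j * (n j - 1)) = minDegree ℓ r n := by
  have hterm : ∀ a S t : ℕ, a * (1 + S + t) + a * (a - 1) = a ^ 2 + S * a + t * a := by
    rintro (_ | a) S t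
    · simp
    · simp only [Nat.add_sub_cancel]
      ring
  simp only [minStart, minDegree, hterm, sum_add_distrib, sum_mul, sum_filter, ite_mul, zero_mul,
    one_mul]

lemma sum_sum_gapSeq_minStart (b : (Σ j, Fin (n j)) → ℕ) :
    ∑ j, ∑ k, gapSeq (minStart ℓ r n j) (fun k => b ⟨j, k⟩) k =
      minDegree ℓ r n + ∑ i, gapWeight n i * b i := by
  simp only [sum_gapSeq]
  rw [sum_add_distrib, sum_minStart_eq_minDegree, ← univ_sigma_univ, sum_sigma]
  rfl

lemma configCount_eq_natCard (d : ℕ) :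
    configCount ℓ r n d = Nat.card {b : (Σ j, Fin (n j)) → ℕ //
      minDegree ℓ r n + ∑ i, gapWeight n i * b i = d} := by
  refine Nat.card_congr
    { toFun := fun m => ⟨fun i => gapDiff (minStart ℓ r n i.1) (m.1 i.1) i.2, ?_⟩
      invFun := fun b => ⟨fun j => gapSeq (minStart ℓ r n j) fun k => b.1 ⟨j, k⟩,
        fun j k => by simp only [gapSeq, minStart]; omega,
        fun j => (isGapSeq_gapSeq _ _).1, fun j => (isGapSeq_gapSeq _ _).2,
        (sum_sum_gapSeq_minStart ℓ r n b.1).trans b.2⟩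
      left_inv := fun m => ?_
      right_inv := fun b => ?_ }
  · obtain ⟨m, -, hstart, hgap, hsum⟩ := m
    refine (sum_sum_gapSeq_minStart ℓ r n _).symm.trans (Eq.trans ?_ hsum)
    exact sum_congr rfl fun j _ => sum_congr rfl fun k _ =>
      congrFun (gapSeq_gapDiff ⟨hstart j, hgap j⟩) k
  · obtain ⟨m, -, hstart, hgap, -⟩ := m
    ext1
    funext j
    exact gapSeq_gapDiff ⟨hstart j, hgap j⟩
  · ext1
    funext ⟨j, k⟩
    exact congrFun (gapDiff_gapSeq _ _) k

lemma chiW_eq_X_pow_mul : chiW ℓ r n = X ^ minDegree ℓ r n * PowerSeries.mk fun d =>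
    (Nat.card {b : (Σ j, Fin (n j)) → ℕ // ∑ i, gapWeight n i * b i = d} : ℚ) := by
  simp only [chiW, configCount_eq_natCard]
  exact mk_natCard_add_eq_X_pow_mul _ _

lemma prod_prod_range_one_sub_X_pow_eq_prod_gapWeight (R : Type*) [CommRing R] :
    ∏ j, ∏ k ∈ range (n j), (1 - X ^ (k + 1) : R⟦X⟧) = ∏ i, (1 - X ^ gapWeight n i) := by
  rw [← univ_sigma_univ, prod_sigma]
  refine prod_congr rfl fun j _ => ?_
  rw [← prod_range_reflect,
    ← Fin.prod_univ_eq_prod_range (fun k => (1 - X ^ (n j - 1 - k + 1) : R⟦X⟧))]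
  refine prod_congr rfl fun k _ => ?_
  simp only [gapWeight]
  congr 2
  omega

end Configurations

theorem character_formula_general (ℓ r : ℕ) (n : Fin ℓ → ℕ) :
    chiW ℓ r n =
      (X : PowerSeries ℚ) ^
          ((∑ i, n i ^ 2) +
           (∑ j, ∑ i ∈ Finset.univ.filter (· < j), n i * n j) +
           (∑ i ∈ Finset.univ.filter (fun i : Fin ℓ => (i : ℕ) + 1 ≤ r), n i)) *
        (∏ j, ∏ k ∈ Finset.range (n j), (1 - (X : PowerSeries ℚ) ^ (k + 1)))⁻¹ ∧
    chiW ℓ r n * (∏ j, ∏ k ∈ Finset.range (n j), (1 - (X : PowerSeries ℚ) ^ (k + 1))) =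
      (X : PowerSeries ℚ) ^
          ((∑ i, n i ^ 2) +
           (∑ j, ∑ i ∈ Finset.univ.filter (· < j), n i * n j) +
           (∑ i ∈ Finset.univ.filter (fun i : Fin ℓ => (i : ℕ) + 1 ≤ r), n i)) := by
  have hconst : constantCoeff (∏ j, ∏ k ∈ range (n j), (1 - X ^ (k + 1)) : ℚ⟦X⟧) ≠ 0 := by
    simp [map_prod]
  have key : chiW ℓ r n * ∏ j, ∏ k ∈ range (n j), (1 - X ^ (k + 1)) = X ^ minDegree ℓ r n := by
    rw [chiW_eq_X_pow_mul, prod_prod_range_one_sub_X_pow_eq_prod_gapWeight, mul_assoc,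
      mk_natCard_mul_prod_one_sub_X_pow ℚ gapWeight_ne_zero, mul_one]
  exact ⟨(eq_mul_inv_iff_mul_eq hconst).2 key, key⟩

/-- `χ^α(q) = q^{N(α,r)} / ((q)_{n_1} ⋯ (q)_{n_ℓ})`, and in particular
`χ^α(q) ⋅ ∏_j (q)_{n_j} = q^{N(α,r)}`, where
`N(α,r) = Σ n_i² + Σ_{i<j} n_i n_j + Σ_{i=1}^r n_i`. -/
theorem character_formula (ℓ r : ℕ) (hr : r ≤ ℓ) (n : Fin ℓ → ℕ) :
    chiW ℓ r n =
      (X : PowerSeries ℚ) ^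
          ((∑ i, n i ^ 2) +
           (∑ j, ∑ i ∈ Finset.univ.filter (· < j), n i * n j) +
           (∑ i ∈ Finset.univ.filter (fun i : Fin ℓ => (i : ℕ) + 1 ≤ r), n i)) *
        (∏ j, ∏ k ∈ Finset.range (n j), (1 - (X : PowerSeries ℚ) ^ (k + 1)))⁻¹ ∧
    chiW ℓ r n * (∏ j, ∏ k ∈ Finset.range (n j), (1 - (X : PowerSeries ℚ) ^ (k + 1))) =
      (X : PowerSeries ℚ) ^
          ((∑ i, n i ^ 2) +
           (∑ j, ∑ i ∈ Finset.univ.filter (· < j), n i * n j) +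
           (∑ i ∈ Finset.univ.filter (fun i : Fin ℓ => (i : ℕ) + 1 ≤ r), n i)) :=
  character_formula_general ℓ r n
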